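/- Let N = l^n with integers l ≥ 2 and n ≥ 2. Then the constant 2l^{n−1}-tuple (l mod N, …, l mod N) of elements of ℤ/Nℤ, which is a solution of (E_N), is an irreducible solution of (E_N) if and only if l = 2. -/

import Mathlib

open Matrix

/-- `Mmat [a₁, …, aₙ]` is the product `[[aₙ,-1],[1,0]] ⋯ [[a₁,-1],[1,0]]`. -/
def Mmat {R : Type*} [CommRing R] : List R → Matrix (Fin 2) (Fin 2) R
  | [] => 1
  | a :: t => Mmat t * !![a, -1; 1, 0]

/-- A tuple is a solution of (E_N) if its matrix is `Id` or `-Id`. -/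
def IsSolution {R : Type*} [CommRing R] (l : List R) : Prop :=
  Mmat l = 1 ∨ Mmat l = -1

/-- The sum `(a₁,…,aₙ) ⊕ (b₁,…,bₘ) = (a₁+bₘ, a₂,…,aₙ₋₁, aₙ+b₁, b₂,…,bₘ₋₁)`. -/
def oplus {R : Type*} [CommRing R] (a b : List R) : List R :=
  List.ofFn (fun i : Fin (a.length + b.length - 2) =>
    if (i : ℕ) = 0 then a.getD 0 0 + b.getD (b.length - 1) 0
    else if (i : ℕ) < a.length - 1 then a.getD (i : ℕ) 0
    else if (i : ℕ) = a.length - 1 then a.getD (a.length - 1) 0 + b.getD 0 0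
    else b.getD ((i : ℕ) - a.length + 1) 0)

/-- Two tuples are equivalent if one is a cyclic permutation of the other or of
its reversal. -/
def TupleEquiv {R : Type*} (a b : List R) : Prop :=
  (∃ k, b = a.rotate k) ∨ (∃ k, b = a.reverse.rotate k)

/-- A solution `c` (of size ≥ 3) is reducible if `c ∼ a ⊕ b` with `b` a solution,
`a` of size ≥ 3 and `b` of size ≥ 3. -/
def Reducible {R : Type*} [CommRing R] (c : List R) : Prop :=
  ∃ a b : List R, 3 ≤ a.length ∧ 3 ≤ b.length ∧ IsSolution b ∧
    TupleEquiv c (oplus a b)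

/-- The alternating tuple `(k, -k, k, -k, …)` of length `n`. -/
def altList {R : Type*} [CommRing R] (n : ℕ) (k : R) : List R :=
  List.ofFn (fun i : Fin n => if (i : ℕ) % 2 = 0 then k else -k)

/-- Continuants: `K₋₁ = 0`, `K₀ = 1`,
`Kₙ(x₁,…,xₙ) = x₁·Kₙ₋₁(x₂,…,xₙ) - Kₙ₋₂(x₃,…,xₙ)`. -/
def contK {R : Type*} [CommRing R] : List R → R
  | [] => 1
  | [x] => x
  | x :: y :: t => x * contK (y :: t) - contK t

/-! Write `T c = !![c, -1; 1, 0]`, so that the constant tuple `(c, …, c)` of length `k` has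
matrix `T c ^ k`. Since `T l ^ 2 = l • T l - 1`, the matrix `-T l ^ 2 = 1 - l • T l` is `≡ 1` modulo
`l`, and every further `l`-th power gains one more factor `l`. Hence `T l ^ (2 l^(n-1)) = ±1` modulo
`l^n`, and one step earlier `T l ^ (2 l^(n-2)) = ±(1 - l^(n-1) • T l)` when `2` is invertible
(`l` odd), resp. `T l ^ (4 l^(n-2)) = 1 - 2 l^(n-1) • T l`. For `l ≥ 3` the scalar
`s = -l^(n-1)` (resp. `-2 l^(n-1)`) satisfies `s l = s^2 = 0`, which makes `(s, l, …, l, s)` a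
solution, and `(l, …, l) = (l - s, l, …, l, l - s) ⊕ (s, l, …, l, s)`.

In general, `(c, …, c)` of length `m` is reducible exactly when some `(s, c, …, c, t)` with `K`
inner entries, `1 ≤ K ≤ m - 3`, is a solution. For `c = 2` the `(1,1)` entry of its matrix is
`-(K + 1)`, which is `±1` only if `2^n` divides `K` or `K + 2`: impossible for `1 ≤ K ≤ 2^n - 3`.
-/

section Tuples

variable {R : Type*}

theorem List.exists_eq_cons_append_singleton {l : List R} (h : 2 ≤ l.length) :
    ∃ x mid y, l = x :: (mid ++ [y]) := by
  obtain _ | ⟨x, t⟩ := l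
  · simp at h
  have ht : t ≠ [] := by rintro rfl; simp at h
  exact ⟨x, t.dropLast, t.getLast ht, by rw [List.dropLast_append_getLast]⟩

theorem tupleEquiv_replicate_iff {m : ℕ} {c : R} {d : List R} :
    TupleEquiv (List.replicate m c) d ↔ d = List.replicate m c := by
  refine ⟨?_, fun h => Or.inl ⟨0, by rw [h, List.rotate_zero]⟩⟩
  rintro (⟨k, rfl⟩ | ⟨k, rfl⟩) <;> simp [List.rotate_replicate]

variable [CommRing R]

theorem oplus_cons_append_singleton (x y u v : R) (s t : List R) :
    oplus (x :: (s ++ [y])) (u :: (t ++ [v])) = (x + v) :: (s ++ (y + u) :: t) := by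
  apply List.ext_getElem
  · simp only [oplus, List.length_ofFn, List.length_cons, List.length_append, List.length_nil]
    omega
  intro i h₁ h₂
  simp only [oplus, List.getElem_ofFn, Fin.val_cast, List.length_cons, List.length_append,
    List.length_nil, Nat.add_sub_cancel, List.getD_eq_getElem?_getD]
  split_ifs with h0 hlt heq
  · subst h0
    simp
  · obtain ⟨j, rfl⟩ := Nat.exists_eq_succ_of_ne_zero h0
    have hj : j < s.length := by omega
    simp [List.getElem?_append_left hj, List.getElem_append_left hj, hj]
  · subst heq
    simp
  · obtain ⟨j, rfl⟩ := Nat.exists_eq_add_of_lt (show s.length + 1 < i by omega)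
    have hj : j < t.length := by simp at h₂; omega
    rw [List.getElem_cons_succ, List.getElem_append_right (by omega)]
    simp [List.getElem?_append_left hj, hj, show s.length + 1 + j - s.length = j + 1 by omega]

theorem reducible_replicate_iff {m : ℕ} {c : R} :
    Reducible (List.replicate m c) ↔
      ∃ s t K, 1 ≤ K ∧ K + 3 ≤ m ∧ IsSolution (s :: (List.replicate K c ++ [t])) := by
  constructor
  · rintro ⟨a, b, ha, hb, hsol, hab⟩
    obtain ⟨x, a', y, rfl⟩ := List.exists_eq_cons_append_singleton (by omega : 2 ≤ a.length)
    obtain ⟨u, b', v, rfl⟩ := List.exists_eq_cons_append_singleton (by omega : 2 ≤ b.length)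
    rw [tupleEquiv_replicate_iff, oplus_cons_append_singleton, List.eq_replicate_iff] at hab
    obtain ⟨hlen, hc⟩ := hab
    have hb' : b' = List.replicate b'.length c :=
      List.eq_replicate_iff.2 ⟨rfl, fun z hz => hc z (by simp [hz])⟩
    simp only [List.length_cons, List.length_append, List.length_nil] at ha hb hlen
    exact ⟨u, v, b'.length, by omega, by omega, hb' ▸ hsol⟩
  · rintro ⟨s, t, K, hK, hKm, hsol⟩
    refine ⟨(c - t) :: (List.replicate (m - K - 2) c ++ [c - s]), s :: (List.replicate K c ++ [t]),
      by simp; omega, by simp; omega, hsol, ?_⟩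
    rw [tupleEquiv_replicate_iff, oplus_cons_append_singleton, List.eq_replicate_iff]
    simp only [sub_add_cancel, List.length_cons, List.length_append, List.length_replicate,
      List.mem_cons, List.mem_append, List.mem_replicate]
    exact ⟨by omega, by aesop⟩

end Tuples

theorem Matrix.natCast_mul_eq_smul {ι R : Type*} [Fintype ι] [DecidableEq ι] [Semiring R] (m : ℕ)
    (A : Matrix ι ι R) : (m : Matrix ι ι R) * A = (m : R) • A := by
  rw [← nsmul_eq_mul, Nat.cast_smul_eq_nsmul]

section Mmat

variable {R : Type*} [CommRing R]

theorem Mmat_append (u v : List R) : Mmat (u ++ v) = Mmat v * Mmat u := by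
  induction u with
  | nil => simp [Mmat]
  | cons a u ih => rw [List.cons_append, Mmat, Mmat, ih, mul_assoc]

theorem Mmat_replicate (k : ℕ) (c : R) : Mmat (List.replicate k c) = !![c, -1; 1, 0] ^ k := by
  induction k with
  | zero => rfl
  | succ k ih => rw [List.replicate_succ, Mmat, ih, ← pow_succ]

theorem Mmat_cons_append_singleton (x y : R) (mid : List R) :
    Mmat (x :: (mid ++ [y])) = !![y, -1; 1, 0] * Mmat mid * !![x, -1; 1, 0] := by
  simp [Mmat, Mmat_append]

theorem Mmat_cons_append_singleton_one_one (x y : R) (mid : List R) :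
    Mmat (x :: (mid ++ [y])) 1 1 = -Mmat mid 0 0 := by
  simp [Mmat_cons_append_singleton, mul_apply, Fin.sum_univ_two, vecMul, dotProduct]

theorem isSolution_cons_replicate_append_singleton {c s : R} {k : ℕ} (hsc : s * c = 0)
    (hss : s * s = 0) (h : !![c, -1; 1, 0] ^ k = 1 + s • !![c, -1; 1, 0] ∨
      !![c, -1; 1, 0] ^ k = -(1 + s • !![c, -1; 1, 0])) :
    IsSolution (s :: (List.replicate k c ++ [s])) := by
  have hconj : !![s, -1; 1, 0] * (1 + s • !![c, -1; 1, 0]) * !![s, -1; 1, 0] = -1 := by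
    ext i j
    fin_cases i <;> fin_cases j <;>
      simp [mul_apply, Fin.sum_univ_two, one_apply, vecMul, dotProduct] <;> grind
  rw [IsSolution, Mmat_cons_append_singleton, Mmat_replicate]
  rcases h with h | h
  · exact Or.inr (by rw [h, hconj])
  · exact Or.inl (by rw [h, mul_neg, neg_mul, hconj, neg_neg])

theorem pow_two_apply_zero_zero (K : ℕ) : (!![(2 : R), -1; 1, 0] ^ K) 0 0 = K + 1 := by
  suffices !![(2 : R), -1; 1, 0] ^ K = !![(K : R) + 1, -K; K, 1 - K] by simp [this]
  induction K with
  | zero => simp [one_fin_two]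
  | succ K ih =>
    rw [pow_succ, ih]
    ext i j
    fin_cases i <;> fin_cases j <;> simp [mul_apply, Fin.sum_univ_two] <;> ring

theorem sq_eq_natCast_mul_sub_one (l : ℕ) :
    !![(l : R), -1; 1, 0] ^ 2 = (l : Matrix (Fin 2) (Fin 2) R) * !![(l : R), -1; 1, 0] - 1 := by
  rw [natCast_mul_eq_smul]
  ext i j
  fin_cases i <;> fin_cases j <;> simp [sq, mul_apply, Fin.sum_univ_two]
  ring

end Mmat

theorem exists_one_add_pow_eq {R : Type*} [CommRing R] (c : R) (m : ℕ) :
    ∃ w, (1 + c) ^ m = 1 + m * c + m.choose 2 * c ^ 2 + c ^ 3 * w := by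
  induction m with
  | zero => exact ⟨0, by simp⟩
  | succ m ih =>
    obtain ⟨w, hw⟩ := ih
    refine ⟨m.choose 2 + w + w * c, ?_⟩
    rw [pow_succ, hw, Nat.choose_succ_succ', Nat.choose_one_right]
    push_cast
    ring

-- Only the doubled congruence `2 * y ≡ 2 * z [mod l]` survives the induction: `2 * l.choose 2`
-- is a multiple of `l`, but `l.choose 2` is not when `l` is even.
theorem exists_one_add_mul_pow_pow {R : Type*} [CommRing R] (l k : ℕ) (z : R) :
    ∃ y r : R, (1 + l * z) ^ l ^ k = 1 + l ^ (k + 1) * y ∧ 2 * y = l * r + 2 * z := by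
  induction k with
  | zero => exact ⟨z, 0, by simp, by ring⟩
  | succ k ih =>
    obtain ⟨y, r, hy, hr⟩ := ih
    obtain ⟨w, hw⟩ := exists_one_add_pow_eq ((l : R) ^ (k + 1) * y) l
    have hchoose : (2 * l.choose 2 : R) = l * (l - 1 : ℕ) := by
      rw [← Nat.cast_ofNat, ← Nat.cast_mul, ← Nat.cast_mul, Nat.choose_two_right,
        Nat.mul_div_cancel' (Nat.even_mul_pred_self l).two_dvd]
    refine ⟨y + l.choose 2 * l ^ k * y ^ 2 + l ^ (2 * k + 1) * y ^ 3 * w,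
      r + (l - 1 : ℕ) * l ^ k * y ^ 2 + 2 * l ^ (2 * k) * y ^ 3 * w, ?_, ?_⟩
    · rw [pow_succ, pow_mul, hy, hw]
      ring
    · linear_combination hr + (l : R) ^ k * y ^ 2 * hchoose

open Polynomial in
theorem exists_pow_two_mul_pow {A : Type*} [Ring A] {l : ℕ} {x : A} (hx : x ^ 2 = l * x - 1)
    (k : ℕ) : ∃ y r : A, x ^ (2 * l ^ k) = (-1) ^ l ^ k * (1 + l ^ (k + 1) * y) ∧
      2 * y = l * r - 2 * x := by
  obtain ⟨y, r, hy, hr⟩ := exists_one_add_mul_pow_pow l k (-X : ℤ[X])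
  refine ⟨aeval x y, aeval x r, ?_, ?_⟩
  · have h := congrArg (aeval x) hy
    simp only [map_pow, map_add, map_one, map_mul, map_natCast, map_neg, aeval_X] at h
    rw [pow_mul, hx, ← h, ← neg_pow]
    congr 1
    noncomm_ring
  · have h := congrArg (aeval x) hr
    simp only [map_mul, map_add, map_ofNat, map_natCast, map_neg, aeval_X] at h
    rw [h, mul_neg, sub_eq_add_neg]

section NilpotentCast

variable {A : Type*} [Ring A] {l n : ℕ} {x : A}

theorem exists_pow_two_mul_pow_sub_two (hx : x ^ 2 = l * x - 1) (hn : 2 ≤ n)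
    (hl : (l : A) ^ n = 0) : ∃ y : A, x ^ (2 * l ^ (n - 2)) = (-1) ^ l ^ (n - 2) * (1 + y) ∧
      y * y = 0 ∧ 2 * y = -(2 * l ^ (n - 1) * x) := by
  obtain ⟨y, r, hy, hr⟩ := exists_pow_two_mul_pow hx (n - 2)
  have hn1 : n - 2 + 1 = n - 1 := by omega
  refine ⟨l ^ (n - 1) * y, by rw [hy, hn1], ?_, ?_⟩
  · have hsq : (l : A) ^ (n - 1) * (l : A) ^ (n - 1) = 0 := by
      rw [← pow_add, show n - 1 + (n - 1) = n + (n - 2) by omega, pow_add, hl, zero_mul]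
    rw [mul_assoc, ← mul_assoc y, ← (Nat.cast_commute _ y).pow_left, mul_assoc, ← mul_assoc,
      hsq, zero_mul]
  · have hln : (l : A) ^ (n - 1) * l = 0 := by rw [← pow_succ, show n - 1 + 1 = n by omega, hl]
    have h2 : Commute ((l : A) ^ (n - 1)) 2 := (Nat.cast_commute l 2).pow_left _
    calc 2 * (l ^ (n - 1) * y) = l ^ (n - 1) * (2 * y) := by rw [← mul_assoc, ← h2.eq, mul_assoc]
      _ = l ^ (n - 1) * l * r - l ^ (n - 1) * 2 * x := by rw [hr, mul_sub, mul_assoc, mul_assoc]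
      _ = -(2 * l ^ (n - 1) * x) := by rw [hln, h2.eq, zero_mul, zero_sub]

theorem pow_two_mul_pow_pred_eq (hx : x ^ 2 = l * x - 1) (hn : 1 ≤ n) (hl : (l : A) ^ n = 0) :
    x ^ (2 * l ^ (n - 1)) = (-1) ^ l ^ (n - 1) := by
  obtain ⟨y, -, hy, -⟩ := exists_pow_two_mul_pow hx (n - 1)
  rw [hy, Nat.sub_add_cancel hn, hl, zero_mul, add_zero, mul_one]

theorem pow_two_mul_pow_sub_two_eq (hx : x ^ 2 = l * x - 1) (hn : 2 ≤ n) (hl : (l : A) ^ n = 0)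
    (h2 : IsUnit (2 : A)) :
    x ^ (2 * l ^ (n - 2)) = (-1) ^ l ^ (n - 2) * (1 - l ^ (n - 1) * x) := by
  obtain ⟨y, hy, -, h2y⟩ := exists_pow_two_mul_pow_sub_two hx hn hl
  rw [hy, h2.mul_left_cancel (h2y.trans (by rw [mul_neg, mul_assoc])), sub_eq_add_neg]

theorem pow_four_mul_pow_sub_two_eq (hx : x ^ 2 = l * x - 1) (hn : 2 ≤ n)
    (hl : (l : A) ^ n = 0) :
    x ^ (4 * l ^ (n - 2)) = 1 - 2 * l ^ (n - 1) * x := by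
  obtain ⟨y, hy, hyy, h2y⟩ := exists_pow_two_mul_pow_sub_two hx hn hl
  rw [show 4 * l ^ (n - 2) = 2 * l ^ (n - 2) * 2 by ring, pow_mul, hy,
    ((Commute.neg_one_left _).pow_left _).mul_pow, ← pow_mul, mul_comm, pow_mul, neg_one_sq,
    one_pow, one_mul]
  calc (1 + y) ^ 2 = 1 + 2 * y + y * y := by noncomm_ring
    _ = 1 - 2 * l ^ (n - 1) * x := by rw [hyy, h2y, add_zero, sub_eq_add_neg]

end NilpotentCast

section ConstantTuple

variable {l n : ℕ}

theorem natCast_pow_eq_zero : (l : Matrix (Fin 2) (Fin 2) (ZMod (l ^ n))) ^ n = 0 := by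
  rw [← Nat.cast_pow, CharP.cast_eq_zero]

theorem isSolution_replicate (hn : 1 ≤ n) :
    IsSolution (List.replicate (2 * l ^ (n - 1)) (l : ZMod (l ^ n))) := by
  rw [IsSolution, Mmat_replicate,
    pow_two_mul_pow_pred_eq (sq_eq_natCast_mul_sub_one l) hn natCast_pow_eq_zero]
  exact (Nat.even_or_odd _).imp Even.neg_one_pow Odd.neg_one_pow

theorem isUnit_two_of_odd (hodd : Odd l) : IsUnit (2 : Matrix (Fin 2) (Fin 2) (ZMod (l ^ n))) := by
  have : IsUnit ((2 : ℕ) : ZMod (l ^ n)) :=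
    (ZMod.isUnit_iff_coprime 2 _).2 ((Nat.coprime_two_left.2 hodd).pow_right n)
  simpa [map_ofNat] using
    this.map (algebraMap (ZMod (l ^ n)) (Matrix (Fin 2) (Fin 2) (ZMod (l ^ n))))

theorem reducible_replicate_of_three_le (hl : 3 ≤ l) (hn : 2 ≤ n) :
    Reducible (List.replicate (2 * l ^ (n - 1)) (l : ZMod (l ^ n))) := by
  have hsq := sq_eq_natCast_mul_sub_one (R := ZMod (l ^ n)) l
  have hpow := pow_two_mul_pow_sub_two_eq hsq hn natCast_pow_eq_zero
  have hpow4 := pow_four_mul_pow_sub_two_eq hsq hn natCast_pow_eq_zero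
  obtain ⟨m, rfl⟩ := Nat.exists_eq_add_of_le' hn
  simp only [Nat.add_sub_cancel, Nat.add_succ_sub_one] at hpow hpow4 ⊢
  have hlz : (l : ZMod (l ^ (m + 2))) ^ (m + 2) = 0 := by rw [← Nat.cast_pow, ZMod.natCast_self]
  have hpos : 1 ≤ l ^ m := Nat.one_le_pow _ _ (by omega)
  have hlen : 2 * l ^ (m + 1) = 2 * l ^ m * l := by ring
  rw [reducible_replicate_iff]
  rcases Nat.even_or_odd l with heven | hodd
  · have hl4 : 4 ≤ l := by obtain ⟨j, rfl⟩ := heven; omega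
    refine ⟨-(2 * l ^ (m + 1)), _, 4 * l ^ m, by omega, by nlinarith,
      isSolution_cons_replicate_append_singleton (by linear_combination (-2) * hlz)
        (by linear_combination (4 * (l : ZMod (l ^ (m + 2))) ^ m) * hlz) (Or.inl ?_)⟩
    rw [hpow4, mul_assoc, ← Nat.cast_pow, natCast_mul_eq_smul, Nat.cast_pow, two_mul]
    module
  · refine ⟨-(l ^ (m + 1)), _, 2 * l ^ m, by omega, by nlinarith,
      isSolution_cons_replicate_append_singleton (by linear_combination (-1) * hlz)
        (by linear_combination ((l : ZMod (l ^ (m + 2))) ^ m) * hlz) (Or.inr ?_)⟩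
    rw [hpow (isUnit_two_of_odd hodd), hodd.pow.neg_one_pow, ← Nat.cast_pow, natCast_mul_eq_smul,
      Nat.cast_pow, neg_one_mul]
    module

theorem not_reducible_replicate_two {N m : ℕ} (hm : m ≤ N) :
    ¬ Reducible (List.replicate m (2 : ZMod N)) := by
  rw [reducible_replicate_iff]
  rintro ⟨s, t, K, hK, hKm, hsol⟩
  have h11 := Mmat_cons_append_singleton_one_one s t (List.replicate K (2 : ZMod N))
  rw [Mmat_replicate, pow_two_apply_zero_zero] at h11
  have hN : ∀ j, 0 < j → j < N → (j : ZMod N) ≠ 0 := fun j hj hjN h =>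
    absurd (Nat.le_of_dvd hj ((ZMod.natCast_eq_zero_iff j N).1 h)) (by omega)
  rcases hsol with h | h
  · rw [h, one_apply_eq] at h11
    exact hN (K + 2) (by omega) (by omega) (by push_cast; linear_combination h11)
  · rw [h, neg_apply, one_apply_eq] at h11
    exact hN K (by omega) (by omega) (by linear_combination h11)

end ConstantTuple

theorem replicate_l_pow_irreducible_iff (l n : ℕ) (hl : 2 ≤ l) (hn : 2 ≤ n) :
    IsSolution (List.replicate (2 * l ^ (n - 1)) ((l : ℕ) : ZMod (l ^ n))) ∧
    (¬ Reducible (List.replicate (2 * l ^ (n - 1)) ((l : ℕ) : ZMod (l ^ n))) ↔ l = 2) := by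
  refine ⟨isSolution_replicate (by omega), fun hirr => ?_, ?_⟩
  · by_contra hne
    exact hirr (reducible_replicate_of_three_le (by omega) hn)
  · rintro rfl
    rw [Nat.cast_ofNat]
    exact not_reducible_replicate_two (by rw [← pow_succ', Nat.sub_add_cancel (by omega)])
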